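/- For integers x > 4 and 1 < y < x, the vector (1, x, C(x,2) - x + y, C(x+1,3) - C(x,2) + C(y,2) - 1) is an M-vector. -/

import Mathlib

/-! Since `1 ≤ y - 1 < x - 1`, the 2-canonical representation of
`h₂ = C(x,2) - x + y` is `C(x-1,2) + C(y-1,1)`, so `h₂^{<2>} = C(x,3) + C(y,2)`,
while Pascal's rule gives `h₃ = C(x,3) + C(y,2) - 1`. The first inequality is
`h₂ ≤ C(x,2) + x = C(x+1,2) = x^{<1>}`. -/

/-- The largest `n` with `C(n,i) ≤ l` (used in the greedy `i`-canonical
binomial representation). -/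
noncomputable def macN (i l : ℕ) : ℕ := sSup {n : ℕ | Nat.choose n i ≤ l}

/-- The `i`-th Macaulay pseudo-power `l^{<i>}`, defined via the greedy
(`i`-canonical) binomial representation of `l`, with `0^{<i>} = 0`. -/
noncomputable def pseudoPow : ℕ → ℕ → ℕ
  | 0, _ => 0
  | i + 1, l =>
    if l = 0 then 0
    else
      Nat.choose (macN (i + 1) l + 1) (i + 2) +
        pseudoPow i (l - Nat.choose (macN (i + 1) l) (i + 1))

lemma macN_eq_of_choose_le_of_lt {i l m : ℕ} (hle : m.choose i ≤ l)
    (hlt : l < (m + 1).choose i) : macN i l = m := by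
  have hbdd : ∀ n ∈ {n : ℕ | n.choose i ≤ l}, n ≤ m := fun n hn => by
    by_contra! hmn
    have := Nat.choose_le_choose i (Nat.succ_le_of_lt hmn)
    exact absurd (lt_of_lt_of_le hlt this) (not_lt.2 hn)
  exact le_antisymm (csSup_le ⟨m, hle⟩ hbdd) (le_csSup ⟨m, hbdd⟩ hle)

@[simp]
lemma pseudoPow_zero_right (i : ℕ) : pseudoPow i 0 = 0 := by
  cases i <;> simp [pseudoPow]

lemma pseudoPow_one (l : ℕ) : pseudoPow 1 l = (l + 1).choose 2 := by
  by_cases hl : l = 0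
  · simp [hl]
  · have hmac : macN 1 l = l := macN_eq_of_choose_le_of_lt (by simp) (by simp)
    simp [pseudoPow, hl, hmac]

/-- One step of the greedy representation: if `l < C(a,i)`, the leading term of the
`(i+1)`-canonical representation of `C(a,i+1) + l` is `C(a,i+1)`. -/
lemma pseudoPow_succ_choose_add {i a l : ℕ} (hl : l < a.choose i) :
    pseudoPow (i + 1) (a.choose (i + 1) + l) = (a + 1).choose (i + 2) + pseudoPow i l := by
  by_cases h0 : a.choose (i + 1) + l = 0
  · have hai : a < i + 1 := Nat.choose_eq_zero_iff.1 (by omega)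
    have hia : i ≤ a := by by_contra! h; simp [Nat.choose_eq_zero_of_lt h] at hl
    obtain rfl : a = i := by omega
    obtain rfl : l = 0 := by omega
    simp
  · have hmac : macN (i + 1) (a.choose (i + 1) + l) = a :=
      macN_eq_of_choose_le_of_lt (Nat.le_add_right _ _)
        (by rw [Nat.choose_succ_succ', add_comm]; omega)
    simp only [pseudoPow, h0, if_false, hmac, Nat.add_sub_cancel_left]

theorem stmt4_general (x y : ℕ) (hy1 : 1 < y) (hyx : y < x) :
    Nat.choose x 2 - x + y ≤ pseudoPow 1 x ∧
    Nat.choose (x + 1) 3 - Nat.choose x 2 + Nat.choose y 2 - 1 ≤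
      pseudoPow 2 (Nat.choose x 2 - x + y) := by
  obtain ⟨a, rfl⟩ : ∃ a, x = a + 1 := ⟨x - 1, by omega⟩
  obtain ⟨b, rfl⟩ : ∃ b, y = b + 1 := ⟨y - 1, by omega⟩
  have hpascal₂ (n : ℕ) : (n + 1).choose 2 = n.choose 2 + n := by
    rw [Nat.choose_succ_succ', Nat.choose_one_right, add_comm]
  have hpascal₃ : (a + 1 + 1).choose 3 = (a + 1).choose 2 + (a + 1).choose 3 :=
    Nat.choose_succ_succ' (a + 1) 2
  have hh₂ : (a + 1).choose 2 - (a + 1) + (b + 1) = a.choose 2 + b := by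
    have : 0 < a.choose 2 := Nat.choose_pos (by omega)
    rw [hpascal₂]; omega
  refine ⟨?_, ?_⟩
  · rw [pseudoPow_one, hpascal₂ (a + 1)]
    omega
  · rw [hh₂, pseudoPow_succ_choose_add (by simpa using hyx), pseudoPow_one]
    simp only [Nat.reduceAdd] at hpascal₃ ⊢
    omega

/-- For integers `x > 4` and `1 < y < x`, the vector
`(1, x, C(x,2) - x + y, C(x+1,3) - C(x,2) + C(y,2) - 1)` is an M-vector,
i.e. `h_2 ≤ h_1^{<1>}` and `h_3 ≤ h_2^{<2>}`. -/
theorem stmt4 (x y : ℕ) (hx : 4 < x) (hy1 : 1 < y) (hyx : y < x) :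
    Nat.choose x 2 - x + y ≤ pseudoPow 1 x ∧
    Nat.choose (x + 1) 3 - Nat.choose x 2 + Nat.choose y 2 - 1 ≤
      pseudoPow 2 (Nat.choose x 2 - x + y) :=
  stmt4_general x y hy1 hyx
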